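/- Let X = X₁×X₂ with d((x₁,x₂),(y₁,y₂)) = d₁(x₁,y₁) + d₂(x₂,y₂) a separable metric (d₁, d₂ metrics on X₁, X₂). For μ, ν ∈ P(X) with finite first moments and any pivot measure ζ ∈ P(X₁×X₂) (viewing ζ as a measure on X via the identification Y₁×X₂ = X₁×X₂), one has W_d(μ,ν) = W_d(μ,ζ) + W_d(ζ,ν), where W_d is the 1-Wasserstein distance for the metric d. -/
import Mathlib


open MeasureTheory ProbabilityTheory
open scoped ENNReal ProbabilityTheory

noncomputable section

variable {X₁ X₂ Y₁ Y₂ : Type*} [MeasurableSpace X₁] [MeasurableSpace X₂]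
  [MeasurableSpace Y₁] [MeasurableSpace Y₂]

/-- `π` is a transportation plan (coupling) between `μ` and `ν`. -/
def IsCoupling {A B : Type*} [MeasurableSpace A] [MeasurableSpace B]
    (π : Measure (A × B)) (μ : Measure A) (ν : Measure B) : Prop :=
  π.map Prod.fst = μ ∧ π.map Prod.snd = ν

/-- The minimal transportation (Wasserstein) cost for the cost `c`. -/
noncomputable def Wc {A B : Type*} [MeasurableSpace A] [MeasurableSpace B]
    (c : A → B → ℝ≥0∞) (μ : Measure A) (ν : Measure B) : ℝ≥0∞ :=
  ⨅ π ∈ {π : Measure (A × B) | IsCoupling π μ ν}, ∫⁻ p, c p.1 p.2 ∂π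

/-- `(f1, f2)` is a cardinal flow between `μ ∈ P(X₁ × X₂)` and `ν ∈ P(Y₁ × Y₂)`:
the marginal of `f1` on `X = X₁ × X₂` is `μ`, the marginal of `f2` on `Y = Y₁ × Y₂` is `ν`,
and `f1`, `f2` have the same marginal on `Y₁ × X₂`. -/
def IsCardinalFlow (μ : Measure (X₁ × X₂)) (ν : Measure (Y₁ × Y₂))
    (f1 : Measure ((X₁ × X₂) × Y₁)) (f2 : Measure (X₂ × (Y₁ × Y₂))) : Prop :=
  f1.map Prod.fst = μ ∧ f2.map Prod.snd = ν ∧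
    f1.map (fun p => (p.2, p.1.2)) = f2.map (fun p => (p.2.1, p.1))

/-- The set of cardinal flows between `μ` and `ν`. -/
def Flows (μ : Measure (X₁ × X₂)) (ν : Measure (Y₁ × Y₂)) :
    Set (Measure ((X₁ × X₂) × Y₁) × Measure (X₂ × (Y₁ × Y₂))) :=
  {F | IsProbabilityMeasure F.1 ∧ IsProbabilityMeasure F.2 ∧ IsCardinalFlow μ ν F.1 F.2}

/-- The cardinal flow functional `CT(f¹,f²) = ∫ c₁ df¹ + ∫ c₂ df²`. -/
noncomputable def CT (c₁ : X₁ → Y₁ → ℝ≥0∞) (c₂ : X₂ → Y₂ → ℝ≥0∞)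
    (F : Measure ((X₁ × X₂) × Y₁) × Measure (X₂ × (Y₁ × Y₂))) : ℝ≥0∞ :=
  ∫⁻ q, c₁ q.1.1 q.2 ∂F.1 + ∫⁻ q, c₂ q.1 q.2.2 ∂F.2

/-- `ζ` is a pivot measure between `μ` and `ν` for the separable cost `c₁ + c₂`:
some optimal cardinal flow glues on `ζ`. -/
def IsPivot (μ : Measure (X₁ × X₂)) (ν : Measure (Y₁ × Y₂))
    (c₁ : X₁ → Y₁ → ℝ≥0∞) (c₂ : X₂ → Y₂ → ℝ≥0∞) (ζ : Measure (Y₁ × X₂)) : Prop :=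
  ∃ F ∈ Flows μ ν, F.1.map (fun p => (p.2, p.1.2)) = ζ ∧
    CT c₁ c₂ F = ⨅ G ∈ Flows μ ν, CT c₁ c₂ G

/-- Couplings of probability measures are probability measures. -/
lemma IsCoupling.isProbabilityMeasure {A B : Type*} [MeasurableSpace A] [MeasurableSpace B]
    {π : Measure (A × B)} {μ : Measure A} {ν : Measure B} [IsProbabilityMeasure μ]
    (h : IsCoupling π μ ν) : IsProbabilityMeasure π := by
  constructor
  rw [← Set.preimage_univ (f := @Prod.fst A B), ← Measure.map_apply measurable_fst .univ,
    h.1, measure_univ]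

/-- The gluing estimate: the transport cost between `μ` and `ν` is bounded by the sum of
the costs of any pair of couplings glued along the middle marginal `ζ`. -/
lemma Wc_le_glue {X : Type*} [MeasurableSpace X] [StandardBorelSpace X]
    (c : X → X → ℝ≥0∞) (hc : Measurable (Function.uncurry c))
    (htri : ∀ x z y, c x y ≤ c x z + c z y)
    {μ ζ ν : Measure X} [IsProbabilityMeasure μ] [IsProbabilityMeasure ζ]
    {π₁ π₂ : Measure (X × X)} (h₁ : IsCoupling π₁ μ ζ) (h₂ : IsCoupling π₂ ζ ν) :
    Wc c μ ν ≤ ∫⁻ p, c p.1 p.2 ∂π₁ + ∫⁻ p, c p.1 p.2 ∂π₂ := by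
  haveI : Nonempty X := by
    by_contra h
    rw [not_nonempty_iff] at h
    have h0 : (Set.univ : Set X) = ∅ := Set.univ_eq_empty_iff.mpr h
    have := measure_univ (μ := ζ)
    rw [h0, measure_empty] at this
    exact zero_ne_one this
  have hcf : Measurable fun p : X × X => c p.1 p.2 :=
    hc.comp (measurable_fst.prodMk measurable_snd)
  haveI : IsProbabilityMeasure π₁ := h₁.isProbabilityMeasure
  haveI : IsProbabilityMeasure π₂ := h₂.isProbabilityMeasure
  set κ : Kernel (X × X) X := π₂.condKernel.comap Prod.snd measurable_snd with hκ
  have hκa : ∀ a : X × X, κ a = π₂.condKernel a.2 := fun a => Kernel.comap_apply _ _ _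
  set τ' : Measure ((X × X) × X) := π₁ ⊗ₘ κ with hτ'
  have hfst : π₂.fst = ζ := h₂.1
  -- the (z, y) marginal of τ' is π₂
  have hmap : τ'.map (fun p => (p.1.2, p.2)) = π₂ := by
    ext s hs
    have hmeas : Measurable fun p : (X × X) × X => (p.1.2, p.2) :=
      (measurable_fst.snd).prodMk measurable_snd
    rw [Measure.map_apply hmeas hs, hτ', Measure.compProd_apply (hmeas hs)]
    have : ∀ a : X × X, κ a (Prod.mk a ⁻¹' ((fun p : (X × X) × X => (p.1.2, p.2)) ⁻¹' s))
        = π₂.condKernel a.2 (Prod.mk a.2 ⁻¹' s) := by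
      intro a
      rw [hκa]
      rfl
    simp_rw [this]
    rw [← lintegral_map (Kernel.measurable_kernel_prodMk_left hs) measurable_snd,
      h₁.2, ← hfst, ← Measure.compProd_apply hs, π₂.disintegrate π₂.condKernel]
  have hmfst : τ'.map Prod.fst = π₁ := Measure.fst_compProd π₁ κ
  set τ : Measure (X × X) := τ'.map (fun p => (p.1.1, p.2)) with hτ
  have hτmeas : Measurable fun p : (X × X) × X => (p.1.1, p.2) :=
    (measurable_fst.fst).prodMk measurable_snd
  have hcoup : IsCoupling τ μ ν := by
    constructor
    · rw [hτ, Measure.map_map measurable_fst hτmeas]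
      have : (Prod.fst ∘ fun p : (X × X) × X => (p.1.1, p.2)) =
          (Prod.fst ∘ (Prod.fst : (X × X) × X → X × X)) := rfl
      rw [this, ← Measure.map_map measurable_fst measurable_fst, hmfst, h₁.1]
    · rw [hτ, Measure.map_map measurable_snd hτmeas]
      have : (Prod.snd ∘ fun p : (X × X) × X => (p.1.1, p.2)) =
          (Prod.snd ∘ fun p : (X × X) × X => (p.1.2, p.2)) := rfl
      rw [this, ← Measure.map_map measurable_snd
        ((measurable_fst.snd).prodMk measurable_snd), hmap, h₂.2]
  have hcost : ∫⁻ p, c p.1 p.2 ∂τ ≤ ∫⁻ p, c p.1 p.2 ∂π₁ + ∫⁻ p, c p.1 p.2 ∂π₂ := by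
    have hc1 : Measurable fun p : (X × X) × X => c p.1.1 p.1.2 :=
      hc.comp ((measurable_fst.fst).prodMk measurable_fst.snd)
    have e1 : ∫⁻ p, c p.1 p.2 ∂τ = ∫⁻ p : (X × X) × X, c p.1.1 p.2 ∂τ' := by
      rw [hτ, lintegral_map hcf hτmeas]
    have e2 : ∫⁻ p : (X × X) × X, c p.1.1 p.1.2 ∂τ' = ∫⁻ p, c p.1 p.2 ∂π₁ := by
      rw [← hmfst, lintegral_map hcf measurable_fst]
    have e3 : ∫⁻ p : (X × X) × X, c p.1.2 p.2 ∂τ' = ∫⁻ p, c p.1 p.2 ∂π₂ := by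
      rw [← hmap, lintegral_map hcf ((measurable_fst.snd).prodMk measurable_snd)]
    rw [e1, ← e2, ← e3, ← lintegral_add_left hc1]
    exact lintegral_mono fun p => htri _ _ _
  rw [Wc]
  exact le_trans (iInf₂_le τ hcoup) hcost

theorem stmt14 {X₁ X₂ : Type*} [MetricSpace X₁] [MetricSpace X₂]
    [PolishSpace X₁] [PolishSpace X₂]
    [MeasurableSpace X₁] [BorelSpace X₁] [MeasurableSpace X₂] [BorelSpace X₂]
    (μ ν : Measure (X₁ × X₂)) [IsProbabilityMeasure μ] [IsProbabilityMeasure ν]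
    -- finite first moments:
    (hμ : ∃ x₀ : X₁ × X₂, ∫⁻ x, ENNReal.ofReal (dist x.1 x₀.1 + dist x.2 x₀.2) ∂μ ≠ ⊤)
    (hν : ∃ x₀ : X₁ × X₂, ∫⁻ x, ENNReal.ofReal (dist x.1 x₀.1 + dist x.2 x₀.2) ∂ν ≠ ⊤)
    (ζ : Measure (X₁ × X₂)) [IsProbabilityMeasure ζ]
    (hζ : IsPivot μ ν (fun a b => ENNReal.ofReal (dist a b))
      (fun a b => ENNReal.ofReal (dist a b)) ζ) :
    Wc (fun x y : X₁ × X₂ => ENNReal.ofReal (dist x.1 y.1 + dist x.2 y.2)) μ ν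
      = Wc (fun x y : X₁ × X₂ => ENNReal.ofReal (dist x.1 y.1 + dist x.2 y.2)) μ ζ
        + Wc (fun x y : X₁ × X₂ => ENNReal.ofReal (dist x.1 y.1 + dist x.2 y.2)) ζ ν := by
  set c : X₁ × X₂ → X₁ × X₂ → ℝ≥0∞ :=
    fun x y => ENNReal.ofReal (dist x.1 y.1 + dist x.2 y.2) with hcdef
  have hmc : Measurable (Function.uncurry c) := by
    apply ENNReal.measurable_ofReal.comp
    exact ((measurable_fst.fst.dist measurable_snd.fst).add
      (measurable_fst.snd.dist measurable_snd.snd))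
  have hcf : Measurable fun p : (X₁ × X₂) × (X₁ × X₂) => c p.1 p.2 :=
    hmc.comp (measurable_fst.prodMk measurable_snd)
  have htri : ∀ x z y : X₁ × X₂, c x y ≤ c x z + c z y := by
    intro x z y
    calc c x y ≤ ENNReal.ofReal
          ((dist x.1 z.1 + dist x.2 z.2) + (dist z.1 y.1 + dist z.2 y.2)) := by
          apply ENNReal.ofReal_le_ofReal
          have h1 := dist_triangle x.1 z.1 y.1
          have h2 := dist_triangle x.2 z.2 y.2
          linarith
      _ = c x z + c z y := ENNReal.ofReal_add (by positivity) (by positivity)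
  obtain ⟨F, hF, hFζ, hFopt⟩ := hζ
  obtain ⟨hP1, hP2, hm1, hm2, hmm⟩ := hF
  -- the first coupling μ → ζ, pushing forward f¹ via (x, y₁) ↦ (x, (y₁, x₂))
  have b2 : Wc c μ ζ ≤ ∫⁻ q, ENNReal.ofReal (dist q.1.1 q.2) ∂F.1 := by
    set g : (X₁ × X₂) × X₁ → (X₁ × X₂) × (X₁ × X₂) := fun p => (p.1, (p.2, p.1.2)) with hg
    have hgm : Measurable g :=
      measurable_fst.prodMk (measurable_snd.prodMk measurable_fst.snd)
    set π₁ : Measure ((X₁ × X₂) × (X₁ × X₂)) := F.1.map g with hπ₁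
    have hcoup : IsCoupling π₁ μ ζ := by
      constructor
      · rw [hπ₁, Measure.map_map measurable_fst hgm]
        exact hm1
      · rw [hπ₁, Measure.map_map measurable_snd hgm]
        exact hFζ
    have hcost : ∫⁻ p, c p.1 p.2 ∂π₁ = ∫⁻ q, ENNReal.ofReal (dist q.1.1 q.2) ∂F.1 := by
      rw [hπ₁, lintegral_map hcf hgm]
      refine lintegral_congr fun q => ?_
      simp [hcdef, hg, dist_self]
    rw [Wc]
    exact le_of_le_of_eq (iInf₂_le π₁ hcoup) hcost
  -- the second coupling ζ → ν, pushing forward f² via (x₂, y) ↦ ((y₁, x₂), y)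
  have b3 : Wc c ζ ν ≤ ∫⁻ q, ENNReal.ofReal (dist q.1 q.2.2) ∂F.2 := by
    set g : X₂ × (X₁ × X₂) → (X₁ × X₂) × (X₁ × X₂) := fun p => ((p.2.1, p.1), p.2) with hg
    have hgm : Measurable g :=
      (measurable_snd.fst.prodMk measurable_fst).prodMk measurable_snd
    set π₂ : Measure ((X₁ × X₂) × (X₁ × X₂)) := F.2.map g with hπ₂
    have hcoup : IsCoupling π₂ ζ ν := by
      constructor
      · rw [hπ₂, Measure.map_map measurable_fst hgm]
        have : (Prod.fst ∘ g) = fun p : X₂ × (X₁ × X₂) => (p.2.1, p.1) := rfl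
        rw [this, ← hmm, hFζ]
      · rw [hπ₂, Measure.map_map measurable_snd hgm]
        exact hm2
    have hcost : ∫⁻ p, c p.1 p.2 ∂π₂ = ∫⁻ q, ENNReal.ofReal (dist q.1 q.2.2) ∂F.2 := by
      rw [hπ₂, lintegral_map hcf hgm]
      refine lintegral_congr fun q => ?_
      simp [hcdef, hg, dist_self]
    rw [Wc]
    exact le_of_le_of_eq (iInf₂_le π₂ hcoup) hcost
  -- the infimum of the flow functional is at most the transport cost
  have b1 : (⨅ G ∈ Flows μ ν, CT (fun a b : X₁ => ENNReal.ofReal (dist a b))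
      (fun a b : X₂ => ENNReal.ofReal (dist a b)) G) ≤ Wc c μ ν := by
    rw [Wc]
    refine le_iInf₂ fun π hπ => ?_
    haveI : IsProbabilityMeasure π := IsCoupling.isProbabilityMeasure hπ
    set g1 : (X₁ × X₂) × (X₁ × X₂) → (X₁ × X₂) × X₁ := fun q => (q.1, q.2.1) with hg1
    set g2 : (X₁ × X₂) × (X₁ × X₂) → X₂ × (X₁ × X₂) := fun q => (q.1.2, q.2) with hg2
    have hg1m : Measurable g1 := measurable_fst.prodMk measurable_snd.fst
    have hg2m : Measurable g2 := measurable_fst.snd.prodMk measurable_snd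
    set G : Measure ((X₁ × X₂) × X₁) × Measure (X₂ × (X₁ × X₂)) :=
      (π.map g1, π.map g2) with hG
    have hGF : G ∈ Flows μ ν := by
      refine ⟨Measure.isProbabilityMeasure_map hg1m.aemeasurable,
        Measure.isProbabilityMeasure_map hg2m.aemeasurable, ?_, ?_, ?_⟩
      · rw [hG]
        show (π.map g1).map Prod.fst = μ
        rw [Measure.map_map measurable_fst hg1m]
        exact hπ.1
      · rw [hG]
        show (π.map g2).map Prod.snd = ν
        rw [Measure.map_map measurable_snd hg2m]
        exact hπ.2
      · rw [hG]
        show (π.map g1).map (fun p => (p.2, p.1.2)) = (π.map g2).map (fun p => (p.2.1, p.1))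
        rw [Measure.map_map (measurable_snd.prodMk measurable_fst.snd) hg1m,
          Measure.map_map (measurable_snd.fst.prodMk measurable_fst) hg2m]
        rfl
    have hCT : CT (fun a b : X₁ => ENNReal.ofReal (dist a b))
        (fun a b : X₂ => ENNReal.ofReal (dist a b)) G = ∫⁻ p, c p.1 p.2 ∂π := by
      rw [CT, hG]
      show (∫⁻ q, ENNReal.ofReal (dist q.1.1 q.2) ∂π.map g1)
          + (∫⁻ q, ENNReal.ofReal (dist q.1 q.2.2) ∂π.map g2) = _
      have hi1 : Measurable fun q : (X₁ × X₂) × X₁ => ENNReal.ofReal (dist q.1.1 q.2) :=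
        ENNReal.measurable_ofReal.comp (measurable_fst.fst.dist measurable_snd)
      have hi2 : Measurable fun q : X₂ × (X₁ × X₂) => ENNReal.ofReal (dist q.1 q.2.2) :=
        ENNReal.measurable_ofReal.comp (measurable_fst.dist measurable_snd.snd)
      have h1m : Measurable fun q : (X₁ × X₂) × X₁ × X₂ => ENNReal.ofReal (dist q.1.1 q.2.1) :=
        ENNReal.measurable_ofReal.comp (measurable_fst.fst.dist measurable_snd.fst)
      rw [lintegral_map hi1 hg1m, lintegral_map hi2 hg2m]
      simp only [hg1, hg2]
      rw [← lintegral_add_left h1m]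
      exact lintegral_congr fun q => (ENNReal.ofReal_add dist_nonneg dist_nonneg).symm
    exact (iInf₂_le G hGF).trans hCT.le
  refine le_antisymm ?_ ?_
  · -- triangle inequality via gluing
    conv_rhs => rw [Wc, Wc]
    simp_rw [ENNReal.iInf_add, ENNReal.add_iInf]
    refine le_iInf fun π₁ => le_iInf fun h₁ => le_iInf fun π₂ => le_iInf fun h₂ => ?_
    exact Wc_le_glue c hmc htri h₁ h₂
  · calc Wc c μ ζ + Wc c ζ ν
        ≤ ∫⁻ q, ENNReal.ofReal (dist q.1.1 q.2) ∂F.1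
          + ∫⁻ q, ENNReal.ofReal (dist q.1 q.2.2) ∂F.2 := add_le_add b2 b3
      _ = CT (fun a b : X₁ => ENNReal.ofReal (dist a b))
          (fun a b : X₂ => ENNReal.ofReal (dist a b)) F := rfl
      _ = ⨅ G ∈ Flows μ ν, CT (fun a b : X₁ => ENNReal.ofReal (dist a b))
          (fun a b : X₂ => ENNReal.ofReal (dist a b)) G := hFopt
      _ ≤ Wc c μ ν := b1
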